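/- arXiv:1209.5021 — 8 statements merged into one kernel-verified Lean document; each statement's English description precedes it below -/
import Mathlib

section
/- Exactly 8 of the 16 symmetric 2×2×2 tensors over F_2 can be written as a sum of symmetric simple tensors (and hence exactly 8 cannot); moreover a symmetric 2×2×2 tensor over F_2 has such a decomposition if and only if b = c, i.e. x_{112} = x_{122}. -/
open scoped BigOperators

/-- A tensor of order `k` whose indices each range over `{1,2}` (coded as `Fin 2`),
with entries in `ZMod p`, is symmetric if its entries are invariant under all
permutations of the indices. -/
def IsSymTensor (k p : ℕ) (X : (Fin k → Fin 2) → ZMod p) : Prop :=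
  ∀ σ : Equiv.Perm (Fin k), ∀ v : Fin k → Fin 2, X (v ∘ σ) = X v

/-- The symmetric simple (rank-one) tensor `u ⊗ u ⊗ ⋯ ⊗ u` (`k` factors):
its `(v 0, …, v (k-1))` entry is `∏ i, u (v i)`. -/
def simpleTensor (k p : ℕ) (u : Fin 2 → ZMod p) : (Fin k → Fin 2) → ZMod p :=
  fun v => ∏ i, u (v i)

/-- `X` is a sum of `s` nonzero symmetric simple tensors. -/
def HasSymDecompLen (k p : ℕ) (X : (Fin k → Fin 2) → ZMod p) (s : ℕ) : Prop :=
  ∃ u : Fin s → Fin 2 → ZMod p,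
    (∀ i, simpleTensor k p (u i) ≠ 0) ∧ X = ∑ i, simpleTensor k p (u i)

/-- `X` admits a symmetric decomposition: it is a finite sum of
(nonzero) symmetric simple tensors. -/
def HasSymDecomp (k p : ℕ) (X : (Fin k → Fin 2) → ZMod p) : Prop :=
  ∃ s, HasSymDecompLen k p X s

/-- The symmetric rank of `X`: the least number of symmetric simple tensors
summing to `X` (the zero tensor has symmetric rank `0`). -/
noncomputable def symRank (k p : ℕ) (X : (Fin k → Fin 2) → ZMod p) : ℕ :=
  sInf {s | HasSymDecompLen k p X s}

/-- The diagonal action of a `2 × 2` matrix `g` on an order-`k` tensor: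
`(g·X)_v = ∑_w (∏ i, g (v i) (w i)) * X_w`. -/
def glAct (k p : ℕ) (g : Matrix (Fin 2) (Fin 2) (ZMod p))
    (X : (Fin k → Fin 2) → ZMod p) : (Fin k → Fin 2) → ZMod p :=
  fun v => ∑ w : Fin k → Fin 2, (∏ i, g (v i) (w i)) * X w

/-- The orbit of a tensor `X` under the diagonal action of `GL₂(F_p)`. -/
def glOrbit (k p : ℕ) (X : (Fin k → Fin 2) → ZMod p) :
    Set ((Fin k → Fin 2) → ZMod p) :=
  {Y | ∃ g : GL (Fin 2) (ZMod p), Y = glAct k p (g : Matrix (Fin 2) (Fin 2) (ZMod p)) X}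

/- ### Auxiliary development -/

/-- `X` lies in the `F₂`-span of the three nonzero symmetric simple tensors. -/
def SpanP (X : (Fin 3 → Fin 2) → ZMod 2) : Prop :=
  ∃ c1 c2 c3 : ZMod 2,
    X = fun v => c1 * simpleTensor 3 2 ![1,0] v + c2 * simpleTensor 3 2 ![0,1] v
        + c3 * simpleTensor 3 2 ![1,1] v

lemma classify (u : Fin 2 → ZMod 2) (hu : simpleTensor 3 2 u ≠ 0) :
    u = ![1,0] ∨ u = ![0,1] ∨ u = ![1,1] := by
  revert hu; revert u; decide

lemma spanP_add (u : Fin 2 → ZMod 2) (hu : simpleTensor 3 2 u ≠ 0)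
    (Y : (Fin 3 → Fin 2) → ZMod 2) (hY : SpanP Y) :
    SpanP (fun v => simpleTensor 3 2 u v + Y v) := by
  obtain ⟨c1, c2, c3, rfl⟩ := hY
  rcases classify u hu with h | h | h <;> subst h
  · exact ⟨c1 + 1, c2, c3, by funext v; ring⟩
  · exact ⟨c1, c2 + 1, c3, by funext v; ring⟩
  · exact ⟨c1, c2, c3 + 1, by funext v; ring⟩

lemma sum_spanP : ∀ (s : ℕ) (u : Fin s → Fin 2 → ZMod 2),
    (∀ i, simpleTensor 3 2 (u i) ≠ 0) → SpanP (∑ i, simpleTensor 3 2 (u i)) := by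
  intro s
  induction s with
  | zero =>
    intro u hu
    have h : (∑ i : Fin 0, simpleTensor 3 2 (u i)) = 0 := by simp
    rw [h]
    exact ⟨0, 0, 0, by funext v; simp⟩
  | succ n ih =>
    intro u hu
    have hrw : (∑ i : Fin (n+1), simpleTensor 3 2 (u i))
        = fun v => simpleTensor 3 2 (u 0) v
            + (∑ i : Fin n, simpleTensor 3 2 (u i.succ)) v := by
      funext v
      rw [Fin.sum_univ_succ]
      simp [Finset.sum_apply]
    rw [hrw]
    exact spanP_add (u 0) (hu 0) _ (ih _ (fun i => hu i.succ))

lemma decomp_spanP {X : (Fin 3 → Fin 2) → ZMod 2} (h : HasSymDecomp 3 2 X) : SpanP X := by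
  obtain ⟨s, u, hu, rfl⟩ := h
  exact sum_spanP s u hu

lemma spanP_decomp {X : (Fin 3 → Fin 2) → ZMod 2} (h : SpanP X) : HasSymDecomp 3 2 X := by
  obtain ⟨c1, c2, c3, rfl⟩ := h
  fin_cases c1 <;> fin_cases c2 <;> fin_cases c3
  · exact ⟨0, ![], by decide, by decide⟩
  · exact ⟨1, ![![1,1]], by decide, by decide⟩
  · exact ⟨1, ![![0,1]], by decide, by decide⟩
  · exact ⟨2, ![![0,1],![1,1]], by decide, by decide⟩
  · exact ⟨1, ![![1,0]], by decide, by decide⟩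
  · exact ⟨2, ![![1,0],![1,1]], by decide, by decide⟩
  · exact ⟨2, ![![1,0],![0,1]], by decide, by decide⟩
  · exact ⟨3, ![![1,0],![0,1],![1,1]], by decide, by decide⟩

/-- weight (number of ones) of an index vector -/
def wt (v : Fin 3 → Fin 2) : ℕ := ∑ i, (v i : ℕ)

/-- the standard vector with `n` ones (in the last `n` slots) -/
def std (n : ℕ) : Fin 3 → Fin 2 := fun i => if 3 ≤ (i : ℕ) + n then 1 else 0

/-- the symmetric tensor with parameters `a b c d` -/
def symOf (a b c d : ZMod 2) : (Fin 3 → Fin 2) → ZMod 2 :=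
  fun v => if wt v = 0 then a else if wt v = 1 then b else if wt v = 2 then c else d

lemma wt_comp (σ : Equiv.Perm (Fin 3)) (v : Fin 3 → Fin 2) : wt (v ∘ σ) = wt v :=
  Equiv.sum_comp σ (fun i => ((v i : ℕ)))

lemma symOf_sym (a b c d : ZMod 2) : IsSymTensor 3 2 (symOf a b c d) := by
  intro σ v
  simp only [symOf, wt_comp]

lemma exists_perm (v : Fin 3 → Fin 2) : ∃ σ : Equiv.Perm (Fin 3), std (wt v) ∘ σ = v := by
  revert v; decide

lemma wt_le (v : Fin 3 → Fin 2) : wt v ≤ 3 := by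
  have h : ∀ i : Fin 3, (v i : ℕ) ≤ 1 := fun i => Fin.is_le (v i)
  calc wt v ≤ ∑ _i : Fin 3, 1 := Finset.sum_le_sum (fun i _ => h i)
    _ = 3 := by simp

lemma symOf_std0 (a b c d : ZMod 2) : symOf a b c d (std 0) = a := by
  have h : wt (std 0) = 0 := by decide
  simp [symOf, h]

lemma symOf_std1 (a b c d : ZMod 2) : symOf a b c d (std 1) = b := by
  have h : wt (std 1) = 1 := by decide
  simp [symOf, h]

lemma symOf_std2 (a b c d : ZMod 2) : symOf a b c d (std 2) = c := by
  have h : wt (std 2) = 2 := by decide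
  simp [symOf, h]

lemma symOf_std3 (a b c d : ZMod 2) : symOf a b c d (std 3) = d := by
  have h : wt (std 3) = 3 := by decide
  simp [symOf, h]

lemma symOf_eq {X : (Fin 3 → Fin 2) → ZMod 2} (hX : IsSymTensor 3 2 X) :
    X = symOf (X (std 0)) (X (std 1)) (X (std 2)) (X (std 3)) := by
  funext v
  obtain ⟨σ, hσ⟩ := exists_perm v
  have hXv : X v = X (std (wt v)) := by
    have h' := hX σ (std (wt v))
    rwa [hσ] at h'
  have h4 : wt v = 0 ∨ wt v = 1 ∨ wt v = 2 ∨ wt v = 3 := by have := wt_le v; omega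
  rcases h4 with h | h | h | h <;> rw [hXv, h] <;> simp [symOf, h]

lemma symOf_inj {a b c d a' b' c' d' : ZMod 2}
    (h : symOf a b c d = symOf a' b' c' d') : a = a' ∧ b = b' ∧ c = c' ∧ d = d' :=
  ⟨by simpa [symOf_std0] using congrFun h (std 0),
   by simpa [symOf_std1] using congrFun h (std 1),
   by simpa [symOf_std2] using congrFun h (std 2),
   by simpa [symOf_std3] using congrFun h (std 3)⟩

lemma spanP_symOf (a b d : ZMod 2) : SpanP (symOf a b b d) := by
  refine ⟨a + b, d + b, b, ?_⟩
  fin_cases a <;> fin_cases b <;> fin_cases d <;> decide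

lemma hasDecomp_symOf (a b d : ZMod 2) : HasSymDecomp 3 2 (symOf a b b d) :=
  spanP_decomp (spanP_symOf a b d)

lemma decomp_bc {X : (Fin 3 → Fin 2) → ZMod 2} (h : HasSymDecomp 3 2 X) :
    X (std 1) = X (std 2) := by
  obtain ⟨c1, c2, c3, hX⟩ := decomp_spanP h
  have h1 : ∀ u : Fin 2 → ZMod 2,
      simpleTensor 3 2 u (std 1) = simpleTensor 3 2 u (std 2) := by decide
  rw [hX]
  simp only [h1]

lemma nondecomp_symOf (a b d : ZMod 2) : ¬ HasSymDecomp 3 2 (symOf a b (b+1) d) := by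
  intro h
  have hbc := decomp_bc h
  rw [symOf_std1, symOf_std2] at hbc
  exact one_ne_zero (left_eq_add.mp hbc)

lemma zmod2_ne {b c : ZMod 2} (h : ¬ c = b) : c = b + 1 := by
  have h01 : ∀ x : ZMod 2, x = 0 ∨ x = 1 := by decide
  rcases h01 (c - b) with hx | hx
  · exact absurd (sub_eq_zero.mp hx) h
  · rw [eq_add_of_sub_eq hx, add_comm]

/-- Exactly 8 of the 16 symmetric 2×2×2 tensors over F₂ are sums of symmetric
simple tensors (hence exactly 8 are not), and a symmetric 2×2×2 tensor over F₂
has a symmetric decomposition iff `x₁₁₂ = x₁₂₂` (i.e. `b = c`). -/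
theorem stmt0 :
    Nat.card {X : (Fin 3 → Fin 2) → ZMod 2 // IsSymTensor 3 2 X} = 16 ∧
    Nat.card {X : (Fin 3 → Fin 2) → ZMod 2 //
      IsSymTensor 3 2 X ∧ HasSymDecomp 3 2 X} = 8 ∧
    Nat.card {X : (Fin 3 → Fin 2) → ZMod 2 //
      IsSymTensor 3 2 X ∧ ¬ HasSymDecomp 3 2 X} = 8 ∧
    ∀ X : (Fin 3 → Fin 2) → ZMod 2, IsSymTensor 3 2 X →
      (HasSymDecomp 3 2 X ↔ X ![0, 0, 1] = X ![0, 1, 1]) := by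
  have s1 : std 1 = ![0, 0, 1] := by decide
  have s2 : std 2 = ![0, 1, 1] := by decide
  refine ⟨?_, ?_, ?_, ?_⟩
  · -- 16 symmetric tensors
    have hb : Function.Bijective
        (fun t : ZMod 2 × ZMod 2 × ZMod 2 × ZMod 2 =>
          (⟨symOf t.1 t.2.1 t.2.2.1 t.2.2.2, symOf_sym _ _ _ _⟩ :
            {X : (Fin 3 → Fin 2) → ZMod 2 // IsSymTensor 3 2 X})) := by
      constructor
      · rintro ⟨a, b, c, d⟩ ⟨a', b', c', d'⟩ h
        simp only [Subtype.mk.injEq] at h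
        obtain ⟨h1, h2, h3, h4⟩ := symOf_inj h
        simp [h1, h2, h3, h4]
      · rintro ⟨X, hX⟩
        exact ⟨(X (std 0), X (std 1), X (std 2), X (std 3)),
          Subtype.ext (symOf_eq hX).symm⟩
    rw [← Nat.card_eq_of_bijective _ hb, Nat.card_eq_fintype_card]
    decide
  · -- 8 decomposable
    have hb : Function.Bijective
        (fun t : ZMod 2 × ZMod 2 × ZMod 2 =>
          (⟨symOf t.1 t.2.1 t.2.1 t.2.2, symOf_sym _ _ _ _, hasDecomp_symOf _ _ _⟩ :
            {X : (Fin 3 → Fin 2) → ZMod 2 //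
              IsSymTensor 3 2 X ∧ HasSymDecomp 3 2 X})) := by
      constructor
      · rintro ⟨a, b, d⟩ ⟨a', b', d'⟩ h
        simp only [Subtype.mk.injEq] at h
        obtain ⟨h1, h2, h3, h4⟩ := symOf_inj h
        simp [h1, h2, h4]
      · rintro ⟨X, hX, hD⟩
        have e := symOf_eq hX
        have hbc := decomp_bc hD
        rw [← hbc] at e
        exact ⟨(X (std 0), X (std 1), X (std 3)), Subtype.ext e.symm⟩
    rw [← Nat.card_eq_of_bijective _ hb, Nat.card_eq_fintype_card]
    decide
  · -- 8 non-decomposable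
    have hb : Function.Bijective
        (fun t : ZMod 2 × ZMod 2 × ZMod 2 =>
          (⟨symOf t.1 t.2.1 (t.2.1 + 1) t.2.2, symOf_sym _ _ _ _,
              nondecomp_symOf _ _ _⟩ :
            {X : (Fin 3 → Fin 2) → ZMod 2 //
              IsSymTensor 3 2 X ∧ ¬ HasSymDecomp 3 2 X})) := by
      constructor
      · rintro ⟨a, b, d⟩ ⟨a', b', d'⟩ h
        simp only [Subtype.mk.injEq] at h
        obtain ⟨h1, h2, h3, h4⟩ := symOf_inj h
        simp [h1, h2, h4]
      · rintro ⟨X, hX, hD⟩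
        have e := symOf_eq hX
        have hbc : X (std 2) = X (std 1) + 1 := by
          apply zmod2_ne
          intro hc
          apply hD
          rw [hc] at e
          rw [e]
          exact hasDecomp_symOf _ _ _
        rw [hbc] at e
        exact ⟨(X (std 0), X (std 1), X (std 3)), Subtype.ext e.symm⟩
    rw [← Nat.card_eq_of_bijective _ hb, Nat.card_eq_fintype_card]
    decide
  · -- the characterization
    intro X hX
    constructor
    · intro h
      rw [← s1, ← s2]
      exact decomp_bc h
    · intro h
      have hbc : X (std 1) = X (std 2) := by rw [s1, s2]; exact h
      have e := symOf_eq hX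
      rw [← hbc] at e
      rw [e]
      exact hasDecomp_symOf _ _ _
end

section
/- Among the symmetric 2×2×2 tensors over F_2 that admit a symmetric decomposition, the numbers having symmetric rank 0, 1, 2, 3 are 1, 3, 3, 1 respectively; in particular the maximum symmetric rank of a decomposable symmetric 2×2×2 tensor over F_2 is 3. -/
open scoped BigOperators

instance instDecHSDL (X : (Fin 3 → Fin 2) → ZMod 2) (s : ℕ) :
    Decidable (HasSymDecompLen 3 2 X s) :=
  inferInstanceAs (Decidable (∃ u : Fin s → Fin 2 → ZMod 2,
    (∀ i, simpleTensor 3 2 (u i) ≠ 0) ∧ X = ∑ i, simpleTensor 3 2 (u i)))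

/-- `a·(e₁⊗e₁⊗e₁) + b·(e₂⊗e₂⊗e₂) + c·((e₁+e₂)⊗(e₁+e₂)⊗(e₁+e₂))` -/
def comb (a b c : ZMod 2) : (Fin 3 → Fin 2) → ZMod 2 :=
  fun v => a * simpleTensor 3 2 ![1,0] v + b * simpleTensor 3 2 ![0,1] v +
    c * simpleTensor 3 2 ![1,1] v

lemma zmod2_cases : ∀ a : ZMod 2, a = 0 ∨ a = 1 := by decide

lemma simple_cases : ∀ u : Fin 2 → ZMod 2, simpleTensor 3 2 u ≠ 0 →
    (simpleTensor 3 2 u = comb 1 0 0 ∨ simpleTensor 3 2 u = comb 0 1 0 ∨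
      simpleTensor 3 2 u = comb 0 0 1) := by decide

lemma sum_comb : ∀ (s : ℕ) (u : Fin s → Fin 2 → ZMod 2),
    (∀ i, simpleTensor 3 2 (u i) ≠ 0) →
    ∃ a b c, (∑ i, simpleTensor 3 2 (u i)) = comb a b c := by
  intro s
  induction s with
  | zero =>
    intro u _
    exact ⟨0, 0, 0, by simp; decide⟩
  | succ s ih =>
    intro u hu
    obtain ⟨a, b, c, hrest⟩ := ih (fun i => u i.succ) (fun i => hu i.succ)
    rw [Fin.sum_univ_succ, hrest]
    rcases simple_cases (u 0) (hu 0) with h | h | h <;> rw [h]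
    · exact ⟨a + 1, b, c, by funext v; simp only [comb, Pi.add_apply]; ring⟩
    · exact ⟨a, b + 1, c, by funext v; simp only [comb, Pi.add_apply]; ring⟩
    · exact ⟨a, b, c + 1, by funext v; simp only [comb, Pi.add_apply]; ring⟩

lemma decomp_comb (X : (Fin 3 → Fin 2) → ZMod 2) (h : HasSymDecomp 3 2 X) :
    ∃ a b c, X = comb a b c := by
  obtain ⟨s, u, hu, hX⟩ := h
  subst hX
  exact sum_comb s u hu

lemma rank_eq (X : (Fin 3 → Fin 2) → ZMod 2) (n : ℕ)
    (h1 : HasSymDecompLen 3 2 X n) (h2 : ∀ m, m < n → ¬ HasSymDecompLen 3 2 X m) :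
    symRank 3 2 X = n := by
  have hne : {s | HasSymDecompLen 3 2 X s}.Nonempty := ⟨n, h1⟩
  refine le_antisymm (Nat.sInf_le h1) (le_of_not_gt fun hlt => ?_)
  exact h2 _ hlt (Nat.sInf_mem hne)

lemma r000 : symRank 3 2 (comb 0 0 0) = 0 := rank_eq _ 0 (by decide) (by decide)
lemma r100 : symRank 3 2 (comb 1 0 0) = 1 := rank_eq _ 1 (by decide) (by decide)
lemma r010 : symRank 3 2 (comb 0 1 0) = 1 := rank_eq _ 1 (by decide) (by decide)
lemma r001 : symRank 3 2 (comb 0 0 1) = 1 := rank_eq _ 1 (by decide) (by decide)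
lemma r110 : symRank 3 2 (comb 1 1 0) = 2 := rank_eq _ 2 (by decide) (by decide)
lemma r101 : symRank 3 2 (comb 1 0 1) = 2 := rank_eq _ 2 (by decide) (by decide)
lemma r011 : symRank 3 2 (comb 0 1 1) = 2 := rank_eq _ 2 (by decide) (by decide)
lemma r111 : symRank 3 2 (comb 1 1 1) = 3 := rank_eq _ 3 (by decide) (by decide)

lemma good_comb (a b c : ZMod 2) :
    IsSymTensor 3 2 (comb a b c) ∧ HasSymDecomp 3 2 (comb a b c) := by
  constructor
  · rcases zmod2_cases a with rfl | rfl <;> rcases zmod2_cases b with rfl | rfl <;>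
      rcases zmod2_cases c with rfl | rfl <;>
      exact fun σ v => by revert σ v; decide
  · rcases zmod2_cases a with rfl | rfl <;> rcases zmod2_cases b with rfl | rfl <;>
      rcases zmod2_cases c with rfl | rfl
    exacts [⟨0, by decide⟩, ⟨1, by decide⟩, ⟨1, by decide⟩, ⟨2, by decide⟩,
      ⟨1, by decide⟩, ⟨2, by decide⟩, ⟨2, by decide⟩, ⟨3, by decide⟩]

lemma rank_cases (a b c : ZMod 2) :
    (comb a b c = comb 0 0 0 ∧ symRank 3 2 (comb a b c) = 0) ∨
    ((comb a b c = comb 1 0 0 ∨ comb a b c = comb 0 1 0 ∨ comb a b c = comb 0 0 1) ∧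
      symRank 3 2 (comb a b c) = 1) ∨
    ((comb a b c = comb 1 1 0 ∨ comb a b c = comb 1 0 1 ∨ comb a b c = comb 0 1 1) ∧
      symRank 3 2 (comb a b c) = 2) ∨
    (comb a b c = comb 1 1 1 ∧ symRank 3 2 (comb a b c) = 3) := by
  rcases zmod2_cases a with rfl | rfl <;> rcases zmod2_cases b with rfl | rfl <;>
    rcases zmod2_cases c with rfl | rfl <;>
    simp only [r000, r100, r010, r001, r110, r101, r011, r111] <;> tauto

lemma set0 : {X : (Fin 3 → Fin 2) → ZMod 2 |
    IsSymTensor 3 2 X ∧ HasSymDecomp 3 2 X ∧ symRank 3 2 X = 0} =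
    {comb 0 0 0} := by
  ext X
  simp only [Set.mem_setOf_eq, Set.mem_singleton_iff]
  constructor
  · rintro ⟨hs, hd, hr⟩
    obtain ⟨a, b, c, rfl⟩ := decomp_comb X hd
    rcases rank_cases a b c with ⟨h, _⟩ | ⟨_, h⟩ | ⟨_, h⟩ | ⟨_, h⟩ <;>
      first | exact h | (rw [hr] at h; exact absurd h (by decide))
  · rintro rfl
    exact ⟨(good_comb 0 0 0).1, (good_comb 0 0 0).2, r000⟩

lemma set1 : {X : (Fin 3 → Fin 2) → ZMod 2 |
    IsSymTensor 3 2 X ∧ HasSymDecomp 3 2 X ∧ symRank 3 2 X = 1} =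
    {comb 1 0 0, comb 0 1 0, comb 0 0 1} := by
  ext X
  simp only [Set.mem_setOf_eq, Set.mem_insert_iff, Set.mem_singleton_iff]
  constructor
  · rintro ⟨hs, hd, hr⟩
    obtain ⟨a, b, c, rfl⟩ := decomp_comb X hd
    rcases rank_cases a b c with ⟨h, h2⟩ | ⟨h, _⟩ | ⟨h, h2⟩ | ⟨h, h2⟩ <;>
      first | exact h | (rw [hr] at h2; exact absurd h2 (by decide))
  · rintro (rfl | rfl | rfl)
    exacts [⟨(good_comb 1 0 0).1, (good_comb 1 0 0).2, r100⟩,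
      ⟨(good_comb 0 1 0).1, (good_comb 0 1 0).2, r010⟩,
      ⟨(good_comb 0 0 1).1, (good_comb 0 0 1).2, r001⟩]

lemma set2 : {X : (Fin 3 → Fin 2) → ZMod 2 |
    IsSymTensor 3 2 X ∧ HasSymDecomp 3 2 X ∧ symRank 3 2 X = 2} =
    {comb 1 1 0, comb 1 0 1, comb 0 1 1} := by
  ext X
  simp only [Set.mem_setOf_eq, Set.mem_insert_iff, Set.mem_singleton_iff]
  constructor
  · rintro ⟨hs, hd, hr⟩
    obtain ⟨a, b, c, rfl⟩ := decomp_comb X hd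
    rcases rank_cases a b c with ⟨h, h2⟩ | ⟨h, h2⟩ | ⟨h, _⟩ | ⟨h, h2⟩ <;>
      first | exact h | (rw [hr] at h2; exact absurd h2 (by decide))
  · rintro (rfl | rfl | rfl)
    exacts [⟨(good_comb 1 1 0).1, (good_comb 1 1 0).2, r110⟩,
      ⟨(good_comb 1 0 1).1, (good_comb 1 0 1).2, r101⟩,
      ⟨(good_comb 0 1 1).1, (good_comb 0 1 1).2, r011⟩]

lemma set3 : {X : (Fin 3 → Fin 2) → ZMod 2 |
    IsSymTensor 3 2 X ∧ HasSymDecomp 3 2 X ∧ symRank 3 2 X = 3} =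
    {comb 1 1 1} := by
  ext X
  simp only [Set.mem_setOf_eq, Set.mem_singleton_iff]
  constructor
  · rintro ⟨hs, hd, hr⟩
    obtain ⟨a, b, c, rfl⟩ := decomp_comb X hd
    rcases rank_cases a b c with ⟨h, h2⟩ | ⟨h, h2⟩ | ⟨h, h2⟩ | ⟨h, _⟩ <;>
      first | exact h | (rw [hr] at h2; exact absurd h2 (by decide))
  · rintro rfl
    exact ⟨(good_comb 1 1 1).1, (good_comb 1 1 1).2, r111⟩

/-- Among the symmetric 2×2×2 tensors over F₂ admitting a symmetric decomposition,
the numbers with symmetric rank 0, 1, 2, 3 are 1, 3, 3, 1; and the maximum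
symmetric rank of such a tensor is 3. -/
theorem stmt1 :
    Nat.card {X : (Fin 3 → Fin 2) → ZMod 2 //
      IsSymTensor 3 2 X ∧ HasSymDecomp 3 2 X ∧ symRank 3 2 X = 0} = 1 ∧
    Nat.card {X : (Fin 3 → Fin 2) → ZMod 2 //
      IsSymTensor 3 2 X ∧ HasSymDecomp 3 2 X ∧ symRank 3 2 X = 1} = 3 ∧
    Nat.card {X : (Fin 3 → Fin 2) → ZMod 2 //
      IsSymTensor 3 2 X ∧ HasSymDecomp 3 2 X ∧ symRank 3 2 X = 2} = 3 ∧
    Nat.card {X : (Fin 3 → Fin 2) → ZMod 2 //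
      IsSymTensor 3 2 X ∧ HasSymDecomp 3 2 X ∧ symRank 3 2 X = 3} = 1 ∧
    (∀ X : (Fin 3 → Fin 2) → ZMod 2, IsSymTensor 3 2 X → HasSymDecomp 3 2 X →
      symRank 3 2 X ≤ 3) ∧
    (∃ X : (Fin 3 → Fin 2) → ZMod 2, IsSymTensor 3 2 X ∧ HasSymDecomp 3 2 X ∧
      symRank 3 2 X = 3) := by
  refine ⟨?_, ?_, ?_, ?_, ?_, ?_⟩
  · exact (Nat.card_congr (Equiv.setCongr set0)).trans
      (by rw [Nat.card_coe_set_eq, Set.ncard_singleton])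
  · exact (Nat.card_congr (Equiv.setCongr set1)).trans
      (by rw [Nat.card_coe_set_eq]
          exact Set.ncard_eq_three.mpr ⟨_, _, _, by decide, by decide, by decide, rfl⟩)
  · exact (Nat.card_congr (Equiv.setCongr set2)).trans
      (by rw [Nat.card_coe_set_eq]
          exact Set.ncard_eq_three.mpr ⟨_, _, _, by decide, by decide, by decide, rfl⟩)
  · exact (Nat.card_congr (Equiv.setCongr set3)).trans
      (by rw [Nat.card_coe_set_eq, Set.ncard_singleton])
  · intro X hs hd
    obtain ⟨a, b, c, rfl⟩ := decomp_comb X hd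
    rcases rank_cases a b c with ⟨_, h⟩ | ⟨_, h⟩ | ⟨_, h⟩ | ⟨_, h⟩ <;> rw [h] <;> omega
  · exact ⟨comb 1 1 1, (good_comb 1 1 1).1, (good_comb 1 1 1).2, r111⟩
end

section
/- Over F_2, the symmetric 2×2×2 tensor X with x_{111} = x_{222} = 0 and all other entries equal to 1 has symmetric rank exactly 3, and its orbit under the diagonal action of GL_2(F_2) consists of X alone (orbit size 1). -/
open scoped BigOperators

def X0 : (Fin 3 → Fin 2) → ZMod 2 :=
  fun v => if (∀ i, v i = 0) ∨ (∀ i, v i = 1) then 0 else 1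

lemma decomp3 : HasSymDecompLen 3 2 X0 3 := by
  refine ⟨![![1,0],![0,1],![1,1]], ?_, ?_⟩ <;> decide

lemma not01 : ¬ HasSymDecompLen 3 2 X0 0 ∧ ¬ HasSymDecompLen 3 2 X0 1 ∧
    ¬ HasSymDecompLen 3 2 X0 2 := by
  refine ⟨?_, ?_, ?_⟩ <;> · rw [HasSymDecompLen]; decide

lemma actfix : ∀ m : Matrix (Fin 2) (Fin 2) (ZMod 2), m.det ≠ 0 →
    glAct 3 2 m X0 = X0 := by decide
/-- Over F₂, the symmetric 2×2×2 tensor with `x₁₁₁ = x₂₂₂ = 0` and all other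
entries `1` has symmetric rank exactly 3, and its orbit under the diagonal
action of GL₂(F₂) is `{X}` (orbit size 1). -/
theorem stmt2 :
    let X : (Fin 3 → Fin 2) → ZMod 2 :=
      fun v => if (∀ i, v i = 0) ∨ (∀ i, v i = 1) then 0 else 1
    HasSymDecomp 3 2 X ∧ symRank 3 2 X = 3 ∧
      glOrbit 3 2 X = {X} ∧ Nat.card (glOrbit 3 2 X) = 1 := by
  intro X
  have hX : X = X0 := rfl
  have horbit : glOrbit 3 2 X = {X} := by
    ext Y
    constructor
    · rintro ⟨g, rfl⟩
      have hdet : ((g : Matrix (Fin 2) (Fin 2) (ZMod 2)).det : ZMod 2) ≠ 0 := by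
        have : IsUnit (g : Matrix (Fin 2) (Fin 2) (ZMod 2)) := ⟨g, rfl⟩
        exact ((Matrix.isUnit_iff_isUnit_det _).mp this).ne_zero
      rw [hX, actfix _ hdet]; rfl
    · rintro rfl
      refine ⟨1, ?_⟩
      have h1 : ((1 : GL (Fin 2) (ZMod 2)) : Matrix (Fin 2) (Fin 2) (ZMod 2)) = 1 := rfl
      rw [h1, hX, actfix 1 (by decide)]
  refine ⟨⟨3, hX ▸ decomp3⟩, ?_, horbit, ?_⟩
  · rw [hX]
    apply le_antisymm
    · exact Nat.sInf_le decomp3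
    · refine le_csInf ⟨3, decomp3⟩ ?_
      intro s hs
      by_contra h
      push_neg at h
      interval_cases s
      · exact not01.1 hs
      · exact not01.2.1 hs
      · exact not01.2.2 hs
  · rw [horbit]
    simp
end

section
/- Every symmetric 2×2×2 tensor over F_3 can be written as a sum of symmetric simple tensors, and every such tensor has symmetric rank at most 4; moreover there exists a symmetric 2×2×2 tensor over F_3 of symmetric rank exactly 4. -/
open scoped BigOperators

set_option maxRecDepth 1000000
set_option maxHeartbeats 10000000


/-- auxiliary: the symmetric tensor with profile `(a,b,c,d)`. -/
def symT (a b c d : ZMod 3) : (Fin 3 → Fin 2) → ZMod 3 := fun v =>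
  if v 0 = 0 then
    (if v 1 = 0 then (if v 2 = 0 then a else b) else (if v 2 = 0 then b else c))
  else
    (if v 1 = 0 then (if v 2 = 0 then b else c) else (if v 2 = 0 then c else d))

/-- auxiliary: explicit decomposition vectors. -/
def decompU (a b c d : ZMod 3) : Fin 4 → Fin 2 → ZMod 3 :=
  ![![a - c, 0], ![0, d - b], ![2*c - b, 2*c - b], ![b - c, 2*(b - c)]]

lemma key_decomp (a b c d : ZMod 3) :
    (∑ i : Fin 4, simpleTensor 3 3 (decompU a b c d i)) = symT a b c d := by
  revert a b c d
  unfold simpleTensor decompU symT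
  decide

lemma filt (n : ℕ) : ∀ (X : (Fin 3 → Fin 2) → ZMod 3)
    (u : Fin n → Fin 2 → ZMod 3), X = ∑ i, simpleTensor 3 3 (u i) →
    ∃ s ≤ n, HasSymDecompLen 3 3 X s := by
  induction n with
  | zero => intro X u h; exact ⟨0, le_refl _, u, fun i => i.elim0, h⟩
  | succ n ih =>
    intro X u h
    by_cases hall : ∀ i, simpleTensor 3 3 (u i) ≠ 0
    · exact ⟨n + 1, le_refl _, u, hall, h⟩
    · push_neg at hall
      obtain ⟨i, hi⟩ := hall
      have h2 : X = ∑ j : Fin n, simpleTensor 3 3 ((u ∘ i.succAbove) j) := by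
        rw [h, Fin.sum_univ_succAbove _ i, hi, zero_add]; rfl
      obtain ⟨s, hs, hd⟩ := ih X (u ∘ i.succAbove) h2
      exact ⟨s, hs.trans (Nat.le_succ n), hd⟩

lemma sym_eq_symT (X : (Fin 3 → Fin 2) → ZMod 3) (hX : IsSymTensor 3 3 X) :
    X = symT (X ![0,0,0]) (X ![0,0,1]) (X ![0,1,1]) (X ![1,1,1]) := by
  have e1 : X ![0,1,0] = X ![0,0,1] := by
    have h := hX (Equiv.swap 1 2) ![0,0,1]
    rwa [show (![0,0,1] : Fin 3 → Fin 2) ∘ (Equiv.swap 1 2) = ![0,1,0] from by decide] at h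
  have e2 : X ![1,0,0] = X ![0,0,1] := by
    have h := hX (Equiv.swap 0 2) ![0,0,1]
    rwa [show (![0,0,1] : Fin 3 → Fin 2) ∘ (Equiv.swap 0 2) = ![1,0,0] from by decide] at h
  have e3 : X ![1,0,1] = X ![0,1,1] := by
    have h := hX (Equiv.swap 0 1) ![0,1,1]
    rwa [show (![0,1,1] : Fin 3 → Fin 2) ∘ (Equiv.swap 0 1) = ![1,0,1] from by decide] at h
  have e4 : X ![1,1,0] = X ![0,1,1] := by
    have h := hX (Equiv.swap 0 2) ![0,1,1]
    rwa [show (![0,1,1] : Fin 3 → Fin 2) ∘ (Equiv.swap 0 2) = ![1,1,0] from by decide] at h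
  funext v
  have hv : v = ![v 0, v 1, v 2] := by funext i; fin_cases i <;> rfl
  have two : ∀ x : Fin 2, x = 0 ∨ x = 1 := by decide
  rcases two (v 0) with h0 | h0 <;> rcases two (v 1) with h1 | h1 <;>
    rcases two (v 2) with h2 | h2 <;>
    rw [show v = _ from by rw [hv, h0, h1, h2]] <;>
    simp only [symT, Matrix.cons_val_zero, Matrix.cons_val_one, Matrix.head_cons,
      Matrix.head_fin_const, Matrix.cons_val_two, Matrix.tail_cons] <;>
    norm_num <;> first | rfl | exact e1 | exact e2 | exact e3 | exact e4

/-- Every symmetric 2×2×2 tensor over F₃ is a sum of symmetric simple tensors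
and has symmetric rank at most 4; moreover some symmetric 2×2×2 tensor over F₃
has symmetric rank exactly 4. -/
theorem stmt3 :
    (∀ X : (Fin 3 → Fin 2) → ZMod 3, IsSymTensor 3 3 X →
      HasSymDecomp 3 3 X ∧ symRank 3 3 X ≤ 4) ∧
    (∃ X : (Fin 3 → Fin 2) → ZMod 3, IsSymTensor 3 3 X ∧ HasSymDecomp 3 3 X ∧
      symRank 3 3 X = 4) := by
  constructor
  · intro X hX
    have hdec : X = ∑ i, simpleTensor 3 3
        (decompU (X ![0,0,0]) (X ![0,0,1]) (X ![0,1,1]) (X ![1,1,1]) i) := by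
      rw [key_decomp]; exact sym_eq_symT X hX
    obtain ⟨s, hs, hd⟩ := filt 4 X _ hdec
    exact ⟨⟨s, hd⟩, (Nat.sInf_le hd).trans hs⟩
  · refine ⟨∑ i : Fin 4, simpleTensor 3 3 (![![1,0],![0,1],![1,1],![1,2]] i), ?_, ?_, ?_⟩
    · unfold IsSymTensor simpleTensor; decide
    · exact ⟨4, ![![1,0],![0,1],![1,1],![1,2]], by unfold simpleTensor; decide, rfl⟩
    · have h4 : HasSymDecompLen 3 3
          (∑ i : Fin 4, simpleTensor 3 3 (![![1,0],![0,1],![1,1],![1,2]] i)) 4 :=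
        ⟨![![1,0],![0,1],![1,1],![1,2]], by unfold simpleTensor; decide, rfl⟩
      refine le_antisymm (Nat.sInf_le h4) (le_csInf ⟨4, h4⟩ ?_)
      intro s hs
      by_contra hlt
      push_neg at hlt
      interval_cases s
      · revert hs
        unfold HasSymDecompLen simpleTensor; decide
      · revert hs
        unfold HasSymDecompLen simpleTensor; decide
      · revert hs
        unfold HasSymDecompLen simpleTensor; decide
      · revert hs
        unfold HasSymDecompLen simpleTensor; decide
end

section
/- The numbers of symmetric 2×2×2 tensors over F_3 of symmetric rank 0, 1, 2, 3, 4 are 1, 8, 24, 32, 16 respectively (these sum to all 81 symmetric 2×2×2 tensors over F_3). -/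
open scoped BigOperators

/-! ### Auxiliary machinery -/

set_option maxRecDepth 1000000

/-- Number of indices equal to 1. -/
def cnt (v : Fin 3 → Fin 2) : Fin 4 :=
  ⟨(v 0).val + (v 1).val + (v 2).val, by
    have h0 := (v 0).isLt; have h1 := (v 1).isLt; have h2 := (v 2).isLt; omega⟩

/-- Canonical index tuple with `j` ones. -/
def wv (j : Fin 4) : Fin 3 → Fin 2 := fun i => if (i : ℕ) < (j : ℕ) then 1 else 0

/-- The symmetric tensor determined by a quadruple. -/
def tns (q : Fin 4 → ZMod 3) : (Fin 3 → Fin 2) → ZMod 3 := fun v => q (cnt v)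

/-- The quadruple of a symmetric cube tensor `u ⊗ u ⊗ u`. -/
def cub (u : Fin 2 → ZMod 3) : Fin 4 → ZMod 3 :=
  fun j => u 0 ^ (3 - (j : ℕ)) * u 1 ^ (j : ℕ)

/-- The eight nonzero vectors of `(ZMod 3)²`. -/
def uOf : Fin 8 → Fin 2 → ZMod 3 :=
  ![![1,0], ![2,0], ![0,1], ![0,2], ![1,1], ![2,2], ![1,2], ![2,1]]

/-- Base-3 encoding of a quadruple. -/
def enc (q : Fin 4 → ZMod 3) : Fin 81 :=
  ⟨(q 0).val + 3 * (q 1).val + 9 * (q 2).val + 27 * (q 3).val, by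
    have h0 := ZMod.val_lt (q 0); have h1 := ZMod.val_lt (q 1)
    have h2 := ZMod.val_lt (q 2); have h3 := ZMod.val_lt (q 3)
    omega⟩

/-- Base-3 decoding. -/
def dec81 (n : Fin 81) : Fin 4 → ZMod 3 :=
  fun j => ((((n : ℕ) / 3 ^ (j : ℕ)) % 3 : ℕ) : ZMod 3)

/-- Digit-wise mod-3 addition on base-3 encodings. -/
def addN (x y : ℕ) : ℕ :=
  (x % 3 + y % 3) % 3 + 3 * ((x / 3 % 3 + y / 3 % 3) % 3)
    + 9 * ((x / 9 % 3 + y / 9 % 3) % 3) + 27 * ((x / 27 % 3 + y / 27 % 3) % 3)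

def addF (x y : Fin 81) : Fin 81 := ⟨addN x y, by simp only [addN]; omega⟩

/-- Encodings of the eight cube tensors `cub (uOf c)`. -/
def tblF : Fin 8 → Fin 81 := ![1, 2, 27, 54, 40, 80, 70, 50]

/-- `EN s n`: the quadruple encoded by `n` is a sum of `s` cube quadruples. -/
def EN : ℕ → Fin 81 → Prop
  | 0, n => n = 0
  | 1, n => ∃ a, n = tblF a
  | 2, n => ∃ a b, n = addF (tblF a) (tblF b)
  | 3, n => ∃ a b c, n = addF (addF (tblF a) (tblF b)) (tblF c)
  | 4, n => ∃ a b c d, n = addF (addF (addF (tblF a) (tblF b)) (tblF c)) (tblF d)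
  | _ + 5, _ => True

instance instEN (s : ℕ) (n : Fin 81) : Decidable (EN s n) :=
  match s with
  | 0 => decidable_of_iff (n = 0) Iff.rfl
  | 1 => decidable_of_iff (∃ a, n = tblF a) Iff.rfl
  | 2 => decidable_of_iff (∃ a b, n = addF (tblF a) (tblF b)) Iff.rfl
  | 3 => decidable_of_iff (∃ a b c, n = addF (addF (tblF a) (tblF b)) (tblF c)) Iff.rfl
  | 4 => decidable_of_iff
      (∃ a b c d, n = addF (addF (addF (tblF a) (tblF b)) (tblF c)) (tblF d)) Iff.rfl
  | _ + 5 => .isTrue trivial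

/-- `PN r n`: minimal decomposition length of the tensor encoded by `n` is `r`. -/
def PN (r : ℕ) (n : Fin 81) : Prop := EN r n ∧ ∀ s < r, ¬ EN s n

instance instPN (r : ℕ) : DecidablePred (PN r) := fun n =>
  decidable_of_iff (EN r n ∧ ∀ s < r, ¬ EN s n) Iff.rfl

/-! ### Finite checks -/

theorem cnt_perm : ∀ σ : Equiv.Perm (Fin 3), ∀ v : Fin 3 → Fin 2, cnt (v ∘ σ) = cnt v := by
  decide

theorem cnt_wv : ∀ j, cnt (wv j) = j := by decide

theorem simple_eq : ∀ u : Fin 2 → ZMod 3, simpleTensor 3 3 u = tns (cub u) := by decide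

theorem simple_ne : ∀ u : Fin 2 → ZMod 3, simpleTensor 3 3 u ≠ 0 ↔ u ≠ 0 := by decide

theorem tns_inj' : ∀ q q' : Fin 4 → ZMod 3, tns q = tns q' → q = q' := by decide

theorem perm_ex : ∀ v : Fin 3 → Fin 2, ∃ σ : Equiv.Perm (Fin 3), wv (cnt v) ∘ σ = v := by
  decide

theorem uOf_ne : ∀ c, uOf c ≠ 0 := by decide

theorem cub_surj : ∀ u : Fin 2 → ZMod 3, u ≠ 0 → ∃ c, cub (uOf c) = cub u := by decide

theorem dec_tblF : ∀ c, dec81 (tblF c) = cub (uOf c) := by decide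

theorem dec_addF : ∀ (m : Fin 81) (c : Fin 8),
    dec81 (addF m (tblF c)) = dec81 m + cub (uOf c) := by decide

theorem enc_dec : ∀ n, enc (dec81 n) = n := by decide

theorem dec_enc : ∀ q, dec81 (enc q) = q := by decide

theorem dec81_zero : dec81 0 = 0 := by decide

/-! ### Structural lemmas -/

theorem dec81_inj {m n : Fin 81} (h : dec81 m = dec81 n) : m = n := by
  have := congrArg enc h
  rwa [enc_dec, enc_dec] at this

/-- `tns` as an additive homomorphism. -/
def tnsHom : (Fin 4 → ZMod 3) →+ ((Fin 3 → Fin 2) → ZMod 3) :=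
  AddMonoidHom.mk' tns (fun _ _ => rfl)

theorem tns_symm (q : Fin 4 → ZMod 3) : IsSymTensor 3 3 (tns q) := by
  intro σ v
  show q (cnt (v ∘ σ)) = q (cnt v)
  rw [cnt_perm σ v]

theorem tns_qOf (X : (Fin 3 → Fin 2) → ZMod 3) (hX : IsSymTensor 3 3 X) :
    tns (fun j => X (wv j)) = X := by
  funext v
  show X (wv (cnt v)) = X v
  obtain ⟨σ, hσ⟩ := perm_ex v
  have h2 := hX σ (wv (cnt v))
  rw [hσ] at h2
  exact h2.symm

theorem qOf_tns (q : Fin 4 → ZMod 3) : (fun j => tns q (wv j)) = q := by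
  funext j
  show q (cnt (wv j)) = q j
  rw [cnt_wv]

theorem hsdl_iff (q : Fin 4 → ZMod 3) (s : ℕ) :
    HasSymDecompLen 3 3 (tns q) s ↔
      ∃ u : Fin s → Fin 2 → ZMod 3, (∀ i, u i ≠ 0) ∧ q = ∑ i, cub (u i) := by
  constructor
  · rintro ⟨u, hne, he⟩
    refine ⟨u, fun i => (simple_ne (u i)).1 (hne i), tns_inj' _ _ ?_⟩
    rw [he]
    simp only [simple_eq]
    exact (map_sum tnsHom (fun i => cub (u i)) Finset.univ).symm
  · rintro ⟨u, hne, he⟩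
    refine ⟨u, fun i => (simple_ne (u i)).2 (hne i), ?_⟩
    rw [he]
    simp only [simple_eq]
    exact map_sum tnsHom (fun i => cub (u i)) Finset.univ

theorem dl_iff_en (n : Fin 81) (s : ℕ) (hs : s ≤ 4) :
    (∃ u : Fin s → Fin 2 → ZMod 3, (∀ i, u i ≠ 0) ∧ dec81 n = ∑ i, cub (u i)) ↔ EN s n := by
  interval_cases s
  · constructor
    · rintro ⟨u, -, he⟩
      show n = 0
      exact dec81_inj (by rw [he, dec81_zero]; simp)
    · rintro (rfl : n = 0)
      exact ⟨Fin.elim0, fun i => i.elim0, by rw [dec81_zero]; simp⟩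
  · constructor
    · rintro ⟨u, hne, he⟩
      obtain ⟨a, ha⟩ := cub_surj (u 0) (hne 0)
      refine ⟨a, dec81_inj ?_⟩
      rw [he, dec_tblF, ha, Fin.sum_univ_one]
    · rintro ⟨a, rfl⟩
      refine ⟨![uOf a], fun i => by fin_cases i <;> exact uOf_ne _, ?_⟩
      rw [dec_tblF, Fin.sum_univ_one]
      simp
  · constructor
    · rintro ⟨u, hne, he⟩
      obtain ⟨a, ha⟩ := cub_surj (u 0) (hne 0)
      obtain ⟨b, hb⟩ := cub_surj (u 1) (hne 1)
      refine ⟨a, b, dec81_inj ?_⟩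
      rw [he, dec_addF, dec_tblF, ha, hb, Fin.sum_univ_two]
    · rintro ⟨a, b, rfl⟩
      refine ⟨![uOf a, uOf b], fun i => by fin_cases i <;> exact uOf_ne _, ?_⟩
      rw [dec_addF, dec_tblF, Fin.sum_univ_two]
      simp
  · constructor
    · rintro ⟨u, hne, he⟩
      obtain ⟨a, ha⟩ := cub_surj (u 0) (hne 0)
      obtain ⟨b, hb⟩ := cub_surj (u 1) (hne 1)
      obtain ⟨c, hc⟩ := cub_surj (u 2) (hne 2)
      refine ⟨a, b, c, dec81_inj ?_⟩
      rw [he, dec_addF, dec_addF, dec_tblF, ha, hb, hc, Fin.sum_univ_three]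
    · rintro ⟨a, b, c, rfl⟩
      refine ⟨![uOf a, uOf b, uOf c], fun i => by fin_cases i <;> exact uOf_ne _, ?_⟩
      rw [dec_addF, dec_addF, dec_tblF, Fin.sum_univ_three]
      simp
  · constructor
    · rintro ⟨u, hne, he⟩
      obtain ⟨a, ha⟩ := cub_surj (u 0) (hne 0)
      obtain ⟨b, hb⟩ := cub_surj (u 1) (hne 1)
      obtain ⟨c, hc⟩ := cub_surj (u 2) (hne 2)
      obtain ⟨d, hd⟩ := cub_surj (u 3) (hne 3)
      refine ⟨a, b, c, d, dec81_inj ?_⟩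
      rw [he, dec_addF, dec_addF, dec_addF, dec_tblF, ha, hb, hc, hd, Fin.sum_univ_four]
    · rintro ⟨a, b, c, d, rfl⟩
      refine ⟨![uOf a, uOf b, uOf c, uOf d], fun i => by fin_cases i <;> exact uOf_ne _, ?_⟩
      rw [dec_addF, dec_addF, dec_addF, dec_tblF, Fin.sum_univ_four]
      simp

theorem hsdl_iff_en (n : Fin 81) (s : ℕ) (hs : s ≤ 4) :
    HasSymDecompLen 3 3 (tns (dec81 n)) s ↔ EN s n :=
  (hsdl_iff _ _).trans (dl_iff_en n s hs)

theorem main_iff (r : ℕ) (hr : r ≤ 4) (n : Fin 81) :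
    (HasSymDecomp 3 3 (tns (dec81 n)) ∧ symRank 3 3 (tns (dec81 n)) = r) ↔ PN r n := by
  constructor
  · rintro ⟨⟨s0, hs0⟩, hrank⟩
    have hmem : symRank 3 3 (tns (dec81 n)) ∈
        {s | HasSymDecompLen 3 3 (tns (dec81 n)) s} := Nat.sInf_mem ⟨s0, hs0⟩
    rw [hrank] at hmem
    refine ⟨(hsdl_iff_en n r hr).1 hmem, fun s hsr hEN => ?_⟩
    have h1 : HasSymDecompLen 3 3 (tns (dec81 n)) s :=
      (hsdl_iff_en n s (by omega)).2 hEN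
    have h2 : symRank 3 3 (tns (dec81 n)) ≤ s := Nat.sInf_le h1
    omega
  · rintro ⟨hEr, hlow⟩
    have hr' : HasSymDecompLen 3 3 (tns (dec81 n)) r := (hsdl_iff_en n r hr).2 hEr
    refine ⟨⟨r, hr'⟩, ?_⟩
    have h1 : symRank 3 3 (tns (dec81 n)) ≤ r := Nat.sInf_le hr'
    rcases eq_or_lt_of_le h1 with h | h
    · exact h
    · exfalso
      have hmem : symRank 3 3 (tns (dec81 n)) ∈
          {s | HasSymDecompLen 3 3 (tns (dec81 n)) s} := Nat.sInf_mem ⟨r, hr'⟩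
      exact hlow _ h ((hsdl_iff_en n _ (by omega)).1 hmem)

/-- Symmetric tensors are parametrized by `Fin 81`. -/
def symEquiv : {X : (Fin 3 → Fin 2) → ZMod 3 // IsSymTensor 3 3 X} ≃ Fin 81 where
  toFun X := enc (fun j => X.1 (wv j))
  invFun n := ⟨tns (dec81 n), tns_symm _⟩
  left_inv X := Subtype.ext (by
    show tns (dec81 (enc fun j => X.1 (wv j))) = X.1
    rw [dec_enc, tns_qOf X.1 X.2])
  right_inv n := by
    show enc (fun j => tns (dec81 n) (wv j)) = n
    rw [qOf_tns, enc_dec]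

/-- Transport of conditioned subtypes along the parametrization. -/
def bijAux (QX : ((Fin 3 → Fin 2) → ZMod 3) → Prop) (QN : Fin 81 → Prop)
    (h : ∀ n, QX (tns (dec81 n)) ↔ QN n) :
    {X : (Fin 3 → Fin 2) → ZMod 3 // IsSymTensor 3 3 X ∧ QX X} ≃ {n : Fin 81 // QN n} where
  toFun X := ⟨enc (fun j => X.1 (wv j)),
    (h _).1 (by rw [dec_enc, tns_qOf X.1 X.2.1]; exact X.2.2)⟩
  invFun n := ⟨tns (dec81 n.1), tns_symm _, (h n.1).2 n.2⟩
  left_inv X := Subtype.ext (by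
    show tns (dec81 (enc fun j => X.1 (wv j))) = X.1
    rw [dec_enc, tns_qOf X.1 X.2.1])
  right_inv n := Subtype.ext (by
    show enc (fun j => tns (dec81 n.1) (wv j)) = n.1
    rw [qOf_tns, enc_dec])

/-- The numbers of symmetric 2×2×2 tensors over F₃ of symmetric rank
0, 1, 2, 3, 4 are 1, 8, 24, 32, 16 respectively (summing to all 81
symmetric 2×2×2 tensors over F₃). -/
theorem stmt4 :
    Nat.card {X : (Fin 3 → Fin 2) → ZMod 3 // IsSymTensor 3 3 X} = 81 ∧
    Nat.card {X : (Fin 3 → Fin 2) → ZMod 3 //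
      IsSymTensor 3 3 X ∧ HasSymDecomp 3 3 X ∧ symRank 3 3 X = 0} = 1 ∧
    Nat.card {X : (Fin 3 → Fin 2) → ZMod 3 //
      IsSymTensor 3 3 X ∧ HasSymDecomp 3 3 X ∧ symRank 3 3 X = 1} = 8 ∧
    Nat.card {X : (Fin 3 → Fin 2) → ZMod 3 //
      IsSymTensor 3 3 X ∧ HasSymDecomp 3 3 X ∧ symRank 3 3 X = 2} = 24 ∧
    Nat.card {X : (Fin 3 → Fin 2) → ZMod 3 //
      IsSymTensor 3 3 X ∧ HasSymDecomp 3 3 X ∧ symRank 3 3 X = 3} = 32 ∧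
    Nat.card {X : (Fin 3 → Fin 2) → ZMod 3 //
      IsSymTensor 3 3 X ∧ HasSymDecomp 3 3 X ∧ symRank 3 3 X = 4} = 16 := by
  refine ⟨?_, ?_, ?_, ?_, ?_, ?_⟩
  · rw [Nat.card_congr symEquiv]
    simp
  · rw [Nat.card_congr (bijAux (fun X => HasSymDecomp 3 3 X ∧ symRank 3 3 X = 0) (PN 0)
        (main_iff 0 (by norm_num))), Nat.card_eq_fintype_card]
    decide
  · rw [Nat.card_congr (bijAux (fun X => HasSymDecomp 3 3 X ∧ symRank 3 3 X = 1) (PN 1)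
        (main_iff 1 (by norm_num))), Nat.card_eq_fintype_card]
    decide
  · rw [Nat.card_congr (bijAux (fun X => HasSymDecomp 3 3 X ∧ symRank 3 3 X = 2) (PN 2)
        (main_iff 2 (by norm_num))), Nat.card_eq_fintype_card]
    decide
  · rw [Nat.card_congr (bijAux (fun X => HasSymDecomp 3 3 X ∧ symRank 3 3 X = 3) (PN 3)
        (main_iff 3 (by norm_num))), Nat.card_eq_fintype_card]
    decide
  · rw [Nat.card_congr (bijAux (fun X => HasSymDecomp 3 3 X ∧ symRank 3 3 X = 4) (PN 4)
        (main_iff 4 (by norm_num))), Nat.card_eq_fintype_card]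
    decide
end

section
/- Over F_3, the symmetric 2×2×2 tensor with x_{111} = 0, x_{112} = x_{121} = x_{211} = 0, x_{122} = x_{212} = x_{221} = 1, x_{222} = 1 has symmetric rank exactly 4. -/
open scoped BigOperators

set_option maxRecDepth 100000
set_option maxHeartbeats 4000000

/-- Over F₃, the symmetric 2×2×2 tensor with `a = b = 0`, `c = d = 1`
(i.e. `x₁₂₂ = x₂₁₂ = x₂₂₁ = x₂₂₂ = 1` and all other entries `0`)
has symmetric rank exactly 4. -/
theorem stmt6 :
    let X : (Fin 3 → Fin 2) → ZMod 3 :=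
      fun v => if 2 ≤ (Finset.univ.filter fun i => v i = 1).card then 1 else 0
    HasSymDecomp 3 3 X ∧ symRank 3 3 X = 4 := by
  intro X
  have h4 : HasSymDecompLen 3 3 X 4 := by
    refine ⟨![![0,1],![2,0],![2,1],![2,2]], ?_, ?_⟩
    · unfold simpleTensor
      decide
    · funext v
      revert v
      decide
  have hnot : ∀ s < 4, ¬ HasSymDecompLen 3 3 X s := by
    unfold HasSymDecompLen simpleTensor
    decide
  refine ⟨⟨4, h4⟩, ?_⟩
  refine le_antisymm (Nat.sInf_le h4) ?_
  refine le_csInf ⟨4, h4⟩ ?_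
  intro m hm
  by_contra h
  exact hnot m (by omega) hm
end

section
/- Exactly 81 of the 243 symmetric 2×2×2×2 tensors over F_3 can be written as a sum of symmetric simple tensors; among these decomposable tensors, the numbers having symmetric rank 0, 1, 2, 3, 4, 5, 6, 7, 8 are 1, 4, 10, 16, 19, 16, 10, 4, 1 respectively, so the maximum symmetric rank of a decomposable symmetric 2×2×2×2 tensor over F_3 is 8. -/
open scoped BigOperators

set_option maxRecDepth 40000

section Aux

def wt4 (v : Fin 4 → Fin 2) : Fin 5 :=
  ⟨(v 0).val + (v 1).val + (v 2).val + (v 3).val, by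
    have := (v 0).isLt; have := (v 1).isLt; have := (v 2).isLt; have := (v 3).isLt; omega⟩

def phi (e : Fin 5 → ZMod 3) : (Fin 4 → Fin 2) → ZMod 3 := fun v => e (wt4 v)

def EE : Fin 4 → Fin 5 → ZMod 3 := ![![1,0,0,0,0], ![0,0,0,0,1], ![1,1,1,1,1], ![1,2,1,2,1]]
def UU : Fin 4 → Fin 2 → ZMod 3 := ![![1,0],![0,1],![1,1],![1,2]]
def sv : Fin 5 → (Fin 4 → Fin 2) := ![![0,0,0,0],![1,0,0,0],![1,1,0,0],![1,1,1,0],![1,1,1,1]]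

def lin (m : Fin 4 → ZMod 3) : Fin 5 → ZMod 3 :=
  fun j => m 0 * EE 0 j + m 1 * EE 1 j + m 2 * EE 2 j + m 3 * EE 3 j

def cf (e : Fin 5 → ZMod 3) : Fin 4 → ZMod 3 :=
  ![e 0 - e 2, e 4 - e 2, e 2 + e 2 - e 1, e 1 - e 2]

def re (e : Fin 5 → ZMod 3) : ℕ :=
  (cf e 0).val + (cf e 1).val + (cf e 2).val + (cf e 3).val

theorem perm_lemma : ∀ v w : Fin 4 → Fin 2, wt4 v = wt4 w →
    ∃ σ : Equiv.Perm (Fin 4), w = v ∘ σ := by decide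

theorem wt_inv : ∀ (σ : Equiv.Perm (Fin 4)) (v : Fin 4 → Fin 2), wt4 (v ∘ σ) = wt4 v := by decide

theorem classify_s15 : ∀ u : Fin 2 → ZMod 3,
    simpleTensor 4 3 u = 0 ∨ ∃ j : Fin 4, simpleTensor 4 3 u = phi (EE j) := by decide

theorem Ulem : ∀ j : Fin 4,
    simpleTensor 4 3 (UU j) = phi (EE j) ∧ simpleTensor 4 3 (UU j) ≠ 0 := by decide

theorem wt_sv : ∀ j : Fin 5, wt4 (sv j) = j := by decide

theorem key1 : ∀ e : Fin 5 → ZMod 3, e 1 = e 3 → lin (cf e) = e := by decide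
theorem key2 : ∀ m : Fin 4 → ZMod 3, cf (lin m) = m := by decide
theorem key3 : ∀ m : Fin 4 → ZMod 3, (lin m) 1 = (lin m) 3 := by decide
theorem re8 : ∀ e : Fin 5 → ZMod 3, re e ≤ 8 := by decide

theorem phi_inj : Function.Injective phi := by
  intro e e' h
  funext j
  have := congrFun h (sv j)
  simpa [phi, wt_sv] using this

theorem sym_phi (e : Fin 5 → ZMod 3) : IsSymTensor 4 3 (phi e) := by
  intro σ v
  show e (wt4 (v ∘ σ)) = e (wt4 v)
  rw [wt_inv]

theorem sym_exists {X : (Fin 4 → Fin 2) → ZMod 3} (hX : IsSymTensor 4 3 X) :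
    ∃ e, X = phi e := by
  refine ⟨fun j => X (sv j), funext fun v => ?_⟩
  obtain ⟨σ, hσ⟩ := perm_lemma v (sv (wt4 v)) (by rw [wt_sv])
  show X v = X (sv (wt4 v))
  rw [hσ, hX σ v]

theorem decomp_add {X Y : (Fin 4 → Fin 2) → ZMod 3} {s t : ℕ}
    (hX : HasSymDecompLen 4 3 X s) (hY : HasSymDecompLen 4 3 Y t) :
    HasSymDecompLen 4 3 (X + Y) (s + t) := by
  obtain ⟨u, hu, hXu⟩ := hX
  obtain ⟨w, hw, hYw⟩ := hY
  refine ⟨Fin.append u w, ?_, ?_⟩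
  · intro i
    induction i using Fin.addCases with
    | left i => rw [Fin.append_left]; exact hu i
    | right i => rw [Fin.append_right]; exact hw i
  · rw [hXu, hYw, Fin.sum_univ_add]
    congr 1
    · exact Finset.sum_congr rfl fun i _ => by rw [Fin.append_left]
    · exact Finset.sum_congr rfl fun i _ => by rw [Fin.append_right]

theorem decomp_nsmul (n : ℕ) (j : Fin 4) : HasSymDecompLen 4 3 (n • phi (EE j)) n := by
  refine ⟨fun _ => UU j, fun _ => (Ulem j).2, ?_⟩
  simp [(Ulem j).1, Finset.sum_const, Finset.card_univ]

theorem decomp_four (n : Fin 4 → ℕ) :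
    HasSymDecompLen 4 3
      (n 0 • phi (EE 0) + n 1 • phi (EE 1) + n 2 • phi (EE 2) + n 3 • phi (EE 3))
      (n 0 + n 1 + n 2 + n 3) :=
  decomp_add (decomp_add (decomp_add (decomp_nsmul _ _) (decomp_nsmul _ _))
    (decomp_nsmul _ _)) (decomp_nsmul _ _)

theorem phi_lin_eq (n : Fin 4 → ℕ) :
    phi (lin fun j => (n j : ZMod 3)) =
      n 0 • phi (EE 0) + n 1 • phi (EE 1) + n 2 • phi (EE 2) + n 3 • phi (EE 3) := by
  funext v
  simp [phi, lin, nsmul_eq_mul]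

theorem forward {X : (Fin 4 → Fin 2) → ZMod 3} {s : ℕ} (h : HasSymDecompLen 4 3 X s) :
    ∃ n : Fin 4 → ℕ, s = n 0 + n 1 + n 2 + n 3 ∧
      X = phi (lin fun j => (n j : ZMod 3)) := by
  obtain ⟨u, hnz, hX⟩ := h
  choose f hf using fun i => (classify_s15 (u i)).resolve_left (hnz i)
  refine ⟨fun j => ((Finset.univ : Finset (Fin s)).filter fun i => f i = j).card, ?_, ?_⟩
  · have := Finset.sum_card_fiberwise_eq_card_filter (Finset.univ : Finset (Fin s))
      (Finset.univ : Finset (Fin 4)) f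
    simp only [Finset.filter_true, Finset.mem_univ, Finset.filter_true_of_mem,
      fun i => Finset.mem_univ (f i), Finset.card_univ, Fintype.card_fin] at this
    exact this.symm.trans (Fin.sum_univ_four _)
  · beta_reduce
    rw [phi_lin_eq]
    have h1 : X = ∑ i, phi (EE (f i)) := by
      rw [hX]; exact Finset.sum_congr rfl fun i _ => hf i
    have h2 : ∑ i, phi (EE (f i)) =
        ∑ j : Fin 4, ∑ i ∈ Finset.univ.filter fun i => f i = j, phi (EE j) :=
      (Finset.sum_fiberwise' Finset.univ f fun j => phi (EE j)).symm
    rw [h1, h2, Fin.sum_univ_four]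
    simp [Finset.sum_const]

end Aux

section Rank

theorem achieve {e : Fin 5 → ZMod 3} (he : e 1 = e 3) :
    HasSymDecompLen 4 3 (phi e) (re e) := by
  have h1 : phi e = phi (lin fun j => (((cf e j).val : ℕ) : ZMod 3)) := by
    congr 1
    conv_lhs => rw [← key1 e he]
    congr 1
    funext j
    simp [ZMod.natCast_val, ZMod.cast_id]
  rw [h1, phi_lin_eq]
  exact decomp_four fun j => (cf e j).val

theorem lower {e : Fin 5 → ZMod 3} {s : ℕ} (he : e 1 = e 3)
    (h : HasSymDecompLen 4 3 (phi e) s) : re e ≤ s := by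
  obtain ⟨n, hs, hX⟩ := forward h
  have he2 : e = lin fun j => (n j : ZMod 3) := phi_inj hX
  have hcf : cf e = fun j => (n j : ZMod 3) := by rw [he2]; exact key2 _
  have hval : ∀ j : Fin 4, (cf e j).val ≤ n j := by
    intro j
    rw [hcf]
    simpa [ZMod.val_natCast] using Nat.mod_le (n j) 3
  have := hval 0; have := hval 1; have := hval 2; have := hval 3
  unfold re; omega

theorem rank_eq_s15 {e : Fin 5 → ZMod 3} (he : e 1 = e 3) :
    symRank 4 3 (phi e) = re e :=
  le_antisymm (Nat.sInf_le (achieve he)) (le_csInf ⟨_, achieve he⟩ fun s hs => lower he hs)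

theorem master {X : (Fin 4 → Fin 2) → ZMod 3} (h2 : HasSymDecomp 4 3 X) :
    ∃ e, X = phi e ∧ e 1 = e 3 := by
  obtain ⟨s, hs⟩ := h2
  obtain ⟨n, _, hX⟩ := forward hs
  exact ⟨lin _, hX, key3 _⟩

theorem count_sym :
    Nat.card {X : (Fin 4 → Fin 2) → ZMod 3 // IsSymTensor 4 3 X} = 243 := by
  have hb : Function.Bijective
      (fun e : Fin 5 → ZMod 3 => (⟨phi e, sym_phi e⟩ :
        {X : (Fin 4 → Fin 2) → ZMod 3 // IsSymTensor 4 3 X})) := by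
    constructor
    · intro a b hab
      exact phi_inj (congrArg Subtype.val hab)
    · rintro ⟨X, hX⟩
      obtain ⟨e, rfl⟩ := sym_exists hX
      exact ⟨e, rfl⟩
  rw [← Nat.card_eq_of_bijective _ hb, Nat.card_eq_fintype_card]
  decide

theorem count_dec :
    Nat.card {X : (Fin 4 → Fin 2) → ZMod 3 //
      IsSymTensor 4 3 X ∧ HasSymDecomp 4 3 X} = 81 := by
  have hb : Function.Bijective
      (fun p : {e : Fin 5 → ZMod 3 // e 1 = e 3} =>
        (⟨phi p.1, sym_phi p.1, ⟨_, achieve p.2⟩⟩ :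
          {X : (Fin 4 → Fin 2) → ZMod 3 // IsSymTensor 4 3 X ∧ HasSymDecomp 4 3 X})) := by
    constructor
    · intro a b hab
      exact Subtype.ext (phi_inj (congrArg Subtype.val hab))
    · rintro ⟨X, hX, hD⟩
      obtain ⟨e, rfl, he⟩ := master hD
      exact ⟨⟨e, he⟩, rfl⟩
  rw [← Nat.card_eq_of_bijective _ hb, Nat.card_eq_fintype_card]
  decide

theorem count_rank (k : ℕ) :
    Nat.card {X : (Fin 4 → Fin 2) → ZMod 3 //
      IsSymTensor 4 3 X ∧ HasSymDecomp 4 3 X ∧ symRank 4 3 X = k} =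
    Fintype.card {e : Fin 5 → ZMod 3 // e 1 = e 3 ∧ re e = k} := by
  have hb : Function.Bijective
      (fun p : {e : Fin 5 → ZMod 3 // e 1 = e 3 ∧ re e = k} =>
        (⟨phi p.1, sym_phi p.1, ⟨_, achieve p.2.1⟩, by rw [rank_eq_s15 p.2.1, p.2.2]⟩ :
          {X : (Fin 4 → Fin 2) → ZMod 3 //
            IsSymTensor 4 3 X ∧ HasSymDecomp 4 3 X ∧ symRank 4 3 X = k})) := by
    constructor
    · intro a b hab
      exact Subtype.ext (phi_inj (congrArg Subtype.val hab))
    · rintro ⟨X, hX, hD, hr⟩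
      obtain ⟨e, rfl, he⟩ := master hD
      exact ⟨⟨e, he, (rank_eq_s15 he).symm.trans hr⟩, rfl⟩
  rw [← Nat.card_eq_of_bijective _ hb, Nat.card_eq_fintype_card]

end Rank

/-- Exactly 81 of the 243 symmetric 2×2×2×2 tensors over F_3 are sums of
symmetric simple tensors; among these, the counts in each symmetric rank are as
listed, and the maximum symmetric rank of such a tensor is 8. -/
theorem thm :
    Nat.card {X : (Fin 4 → Fin 2) → ZMod 3 // IsSymTensor 4 3 X} = 243 ∧
    Nat.card {X : (Fin 4 → Fin 2) → ZMod 3 //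
      IsSymTensor 4 3 X ∧ HasSymDecomp 4 3 X} = 81 ∧
    Nat.card {X : (Fin 4 → Fin 2) → ZMod 3 //
      IsSymTensor 4 3 X ∧ HasSymDecomp 4 3 X ∧ symRank 4 3 X = 0} = 1 ∧
    Nat.card {X : (Fin 4 → Fin 2) → ZMod 3 //
      IsSymTensor 4 3 X ∧ HasSymDecomp 4 3 X ∧ symRank 4 3 X = 1} = 4 ∧
    Nat.card {X : (Fin 4 → Fin 2) → ZMod 3 //
      IsSymTensor 4 3 X ∧ HasSymDecomp 4 3 X ∧ symRank 4 3 X = 2} = 10 ∧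
    Nat.card {X : (Fin 4 → Fin 2) → ZMod 3 //
      IsSymTensor 4 3 X ∧ HasSymDecomp 4 3 X ∧ symRank 4 3 X = 3} = 16 ∧
    Nat.card {X : (Fin 4 → Fin 2) → ZMod 3 //
      IsSymTensor 4 3 X ∧ HasSymDecomp 4 3 X ∧ symRank 4 3 X = 4} = 19 ∧
    Nat.card {X : (Fin 4 → Fin 2) → ZMod 3 //
      IsSymTensor 4 3 X ∧ HasSymDecomp 4 3 X ∧ symRank 4 3 X = 5} = 16 ∧
    Nat.card {X : (Fin 4 → Fin 2) → ZMod 3 //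
      IsSymTensor 4 3 X ∧ HasSymDecomp 4 3 X ∧ symRank 4 3 X = 6} = 10 ∧
    Nat.card {X : (Fin 4 → Fin 2) → ZMod 3 //
      IsSymTensor 4 3 X ∧ HasSymDecomp 4 3 X ∧ symRank 4 3 X = 7} = 4 ∧
    Nat.card {X : (Fin 4 → Fin 2) → ZMod 3 //
      IsSymTensor 4 3 X ∧ HasSymDecomp 4 3 X ∧ symRank 4 3 X = 8} = 1 ∧
    (∀ X : (Fin 4 → Fin 2) → ZMod 3, IsSymTensor 4 3 X → HasSymDecomp 4 3 X →
      symRank 4 3 X ≤ 8) ∧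
    (∃ X : (Fin 4 → Fin 2) → ZMod 3, IsSymTensor 4 3 X ∧ HasSymDecomp 4 3 X ∧
      symRank 4 3 X = 8) := by
  refine ⟨count_sym, count_dec, ?_, ?_, ?_, ?_, ?_, ?_, ?_, ?_, ?_, ?_, ?_⟩
  · rw [count_rank]; decide
  · rw [count_rank]; decide
  · rw [count_rank]; decide
  · rw [count_rank]; decide
  · rw [count_rank]; decide
  · rw [count_rank]; decide
  · rw [count_rank]; decide
  · rw [count_rank]; decide
  · rw [count_rank]; decide
  · intro X h1 h2
    obtain ⟨e, rfl, he⟩ := master h2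
    rw [rank_eq_s15 he]
    exact re8 e
  · refine ⟨phi ![0,0,1,0,0], sym_phi _, ⟨_, achieve (by decide)⟩, ?_⟩
    rw [rank_eq_s15 (by decide)]
    decide
end

section
/- Over F_5, the symmetric 2×2×2×2 tensor X defined by x_{ijkl} = 1 whenever exactly one of the indices (i,j,k,l) equals 1 (i.e. (i,j,k,l) is a permutation of (1,2,2,2)) and x_{ijkl} = 0 otherwise has symmetric rank exactly 10. -/
open scoped BigOperators

/- ### Auxiliary material -/

def Xdef : (Fin 4 → Fin 2) → ZMod 5 :=
  fun v => if (Finset.univ.filter fun i => v i = 0).card = 1 then 1 else 0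

def rep : Fin 6 → Fin 2 → ZMod 5 := ![![0,1],![1,0],![1,1],![1,2],![1,3],![1,4]]

def nrm (u : Fin 2 → ZMod 5) : Fin 6 :=
  if u 0 = 0 then 0 else ⟨1 + (u 1 * u 0 ^ 3).val, by have := ZMod.val_lt (u 1 * u 0 ^ 3); omega⟩

set_option maxHeartbeats 4000000 in
lemma norm_eq' : ∀ a b : ZMod 5, simpleTensor 4 5 ![a,b] ≠ 0 →
    simpleTensor 4 5 ![a,b] = simpleTensor 4 5 (rep (nrm ![a,b])) := by decide

lemma norm_eq (u : Fin 2 → ZMod 5) (h : simpleTensor 4 5 u ≠ 0) :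
    simpleTensor 4 5 u = simpleTensor 4 5 (rep (nrm u)) := by
  have e : ![u 0, u 1] = u := by funext i; fin_cases i <;> rfl
  rw [← e] at h ⊢
  exact norm_eq' (u 0) (u 1) h

def Udef : Fin 10 → Fin 2 → ZMod 5 :=
  ![![1,1],![1,1],![1,1],![1,1],![1,2],![1,2],![1,2],![1,3],![1,3],![1,4]]

set_option maxHeartbeats 4000000 in
lemma upper_ne : ∀ i : Fin 10, simpleTensor 4 5 (Udef i) ≠ 0 := by decide

set_option maxHeartbeats 4000000 in
lemma upper_eq : Xdef = ∑ i, simpleTensor 4 5 (Udef i) := by decide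

lemma upper : HasSymDecompLen 4 5 Xdef 10 := ⟨Udef, upper_ne, upper_eq⟩

set_option synthInstance.maxHeartbeats 1000000 in
set_option synthInstance.maxSize 2000 in
set_option maxHeartbeats 4000000 in
lemma key : ∀ a b c d e f : ZMod 5,
    a + c + d + e + f = 0 →
    c + 3*d + 2*e + 4*f = 1 →
    c + 4*d + 4*e + f = 0 →
    c + 2*d + 3*e + 4*f = 0 →
    b + c + d + e + f = 0 →
    10 ≤ a.val + b.val + c.val + d.val + e.val + f.val := by decide

lemma sum6 (c : Fin 6 → ZMod 5) (v : Fin 4 → Fin 2) :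
    (∑ j, c j • simpleTensor 4 5 (rep j)) v
      = c 0 * simpleTensor 4 5 (rep 0) v + c 1 * simpleTensor 4 5 (rep 1) v
        + c 2 * simpleTensor 4 5 (rep 2) v + c 3 * simpleTensor 4 5 (rep 3) v
        + c 4 * simpleTensor 4 5 (rep 4) v + c 5 * simpleTensor 4 5 (rep 5) v := by
  simp [Fin.sum_univ_six, smul_eq_mul]

lemma key2_s18 (c : Fin 6 → ZMod 5)
    (h : Xdef = ∑ j, c j • simpleTensor 4 5 (rep j)) :
    10 ≤ ∑ j, (c j).val := by
  have E0 : (0 : ZMod 5) = c 0 * 1 + c 1 * 0 + c 2 * 1 + c 3 * 1 + c 4 * 1 + c 5 * 1 := by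
    have := congrFun h ![1,1,1,1]; rw [sum6] at this; exact this
  have E1 : (1 : ZMod 5) = c 0 * 0 + c 1 * 0 + c 2 * 1 + c 3 * 3 + c 4 * 2 + c 5 * 4 := by
    have := congrFun h ![0,1,1,1]; rw [sum6] at this; exact this
  have E2 : (0 : ZMod 5) = c 0 * 0 + c 1 * 0 + c 2 * 1 + c 3 * 4 + c 4 * 4 + c 5 * 1 := by
    have := congrFun h ![0,0,1,1]; rw [sum6] at this; exact this
  have E3 : (0 : ZMod 5) = c 0 * 0 + c 1 * 0 + c 2 * 1 + c 3 * 2 + c 4 * 3 + c 5 * 4 := by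
    have := congrFun h ![0,0,0,1]; rw [sum6] at this; exact this
  have E4 : (0 : ZMod 5) = c 0 * 0 + c 1 * 1 + c 2 * 1 + c 3 * 1 + c 4 * 1 + c 5 * 1 := by
    have := congrFun h ![0,0,0,0]; rw [sum6] at this; exact this
  have := key (c 0) (c 1) (c 2) (c 3) (c 4) (c 5)
    (by linear_combination -E0) (by linear_combination -E1) (by linear_combination -E2)
    (by linear_combination -E3) (by linear_combination -E4)
  simpa [Fin.sum_univ_six] using this

lemma lower_s18 (s : ℕ) (hs : HasSymDecompLen 4 5 Xdef s) : 10 ≤ s := by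
  obtain ⟨u, hne, hsum⟩ := hs
  set n : Fin 6 → ℕ := fun j => (Finset.univ.filter fun i => nrm (u i) = j).card with hn
  have hcard : s = ∑ j, n j := by
    have := Finset.card_eq_sum_card_fiberwise
      (f := fun i => nrm (u i)) (s := (Finset.univ : Finset (Fin s)))
      (t := (Finset.univ : Finset (Fin 6))) (fun _ _ => Finset.mem_univ _)
    simpa [hn] using this
  have h1 : Xdef = ∑ j : Fin 6, ((n j : ZMod 5)) • simpleTensor 4 5 (rep j) := by
    calc Xdef = ∑ i, simpleTensor 4 5 (u i) := hsum
    _ = ∑ i, simpleTensor 4 5 (rep (nrm (u i))) :=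
        Finset.sum_congr rfl fun i _ => norm_eq _ (hne i)
    _ = ∑ j : Fin 6, ∑ i ∈ Finset.univ.filter (fun i => nrm (u i) = j),
          simpleTensor 4 5 (rep (nrm (u i))) := by
        rw [Finset.sum_fiberwise]
    _ = ∑ j : Fin 6, ((n j : ZMod 5)) • simpleTensor 4 5 (rep j) := by
        refine Finset.sum_congr rfl fun j _ => ?_
        rw [Finset.sum_congr rfl (fun i hi => by
          rw [(Finset.mem_filter.mp hi).2]), Finset.sum_const, hn,
          Nat.cast_smul_eq_nsmul]
  have hkey := key2_s18 (fun j => (n j : ZMod 5)) h1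
  have hval : ∀ j : Fin 6, ((n j : ZMod 5)).val ≤ n j := by
    intro j; rw [ZMod.val_natCast]; exact Nat.mod_le _ _
  calc 10 ≤ ∑ j, ((n j : ZMod 5)).val := hkey
  _ ≤ ∑ j, n j := Finset.sum_le_sum fun j _ => hval j
  _ = s := hcard.symm

/-- Over F₅, the symmetric 2×2×2×2 tensor with `x_{ijkl} = 1` whenever exactly
one of the indices `(i,j,k,l)` equals 1 (a permutation of `(1,2,2,2)`) and
`x_{ijkl} = 0` otherwise has symmetric rank exactly 10. -/
theorem stmt18 :
    let X : (Fin 4 → Fin 2) → ZMod 5 :=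
      fun v => if (Finset.univ.filter fun i => v i = 0).card = 1 then 1 else 0
    HasSymDecomp 4 5 X ∧ symRank 4 5 X = 10 := by
  intro X
  have hX : X = Xdef := rfl
  rw [hX]
  exact ⟨⟨10, upper⟩, le_antisymm (Nat.sInf_le upper) (le_csInf ⟨10, upper⟩ lower_s18)⟩
end
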